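/- arXiv:2303.06922 — 2 statements merged into one kernel-verified Lean document; each statement's English description precedes it below -/
import Mathlib

section
/- Let b > 0 and c > 0. The sequence (T_n(b,c))_{n≥0} is log-convex (i.e., T_i(b,c)·T_{j+1}(b,c) ≥ T_{i+1}(b,c)·T_j(b,c) for all 0 ≤ i < j) if and only if b² ≥ 2c. -/
set_option maxHeartbeats 1600000

open Nat Finset

/-- The generalized central trinomial coefficient
`T_n(b,c) = Σ_{k=0}^{⌊n/2⌋} binom(n,2k) binom(2k,k) b^{n−2k} c^k`. -/
noncomputable def genCT (b c : ℝ) (n : ℕ) : ℝ :=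
  ∑ k ∈ Finset.range (n / 2 + 1),
    (n.choose (2 * k) : ℝ) * ((2 * k).choose k : ℝ) * b ^ (n - 2 * k) * c ^ k

noncomputable def trm (b c : ℝ) (n k : ℕ) : ℝ :=
  (n.choose (2 * k) : ℝ) * ((2 * k).choose k : ℝ) * b ^ (n - 2 * k) * c ^ k

lemma genCT_eq_sum (b c : ℝ) (n N : ℕ) (hN : n / 2 + 1 ≤ N) :
    genCT b c n = ∑ k ∈ Finset.range N, trm b c n k := by
  rw [genCT]
  apply Finset.sum_subset (Finset.range_subset_range.2 hN)
  intro k hk hk'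
  simp only [Finset.mem_range] at hk hk'
  have : n < 2 * k := by omega
  simp [trm, Nat.choose_eq_zero_of_lt this]

lemma key_main (m j : ℕ) :
    ((m+2*j+4 : ℕ):ℝ) * ((m+2*j+4).choose (2*j+2)) * ((2*j+2).choose (j+1))
      + ((m+2*j+3 : ℕ):ℝ) * ((m+2*j+2).choose (2*j+2)) * ((2*j+2).choose (j+1))
    = ((2*(m+2*j+2)+3 : ℕ):ℝ) * ((m+2*j+3).choose (2*j+2)) * ((2*j+2).choose (j+1))
      + 4 * ((m+2*j+3 : ℕ):ℝ) * ((m+2*j+2).choose (2*j)) * ((2*j).choose j) := by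
  have h1 : (2*j+2) ≤ m+2*j+4 := by omega
  have h2 : (2*j+2) ≤ m+2*j+2 := by omega
  have h3 : (2*j+2) ≤ m+2*j+3 := by omega
  have h4 : (2*j) ≤ m+2*j+2 := by omega
  have h5 : (j+1) ≤ 2*j+2 := by omega
  have h6 : j ≤ 2*j := by omega
  rw [Nat.cast_choose ℝ h1, Nat.cast_choose ℝ h2, Nat.cast_choose ℝ h3,
      Nat.cast_choose ℝ h4, Nat.cast_choose ℝ h5, Nat.cast_choose ℝ h6]
  have e1 : m+2*j+4 - (2*j+2) = m+2 := by omega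
  have e2 : m+2*j+2 - (2*j+2) = m := by omega
  have e3 : m+2*j+3 - (2*j+2) = m+1 := by omega
  have e4 : m+2*j+2 - 2*j = m+2 := by omega
  have e5 : 2*j+2 - (j+1) = j+1 := by omega
  have e6 : 2*j - j = j := by omega
  rw [e1, e2, e3, e4, e5, e6]
  have f1 : ((m+2*j+4).factorial : ℝ) = (m+2*j+4) * (m+2*j+3) * ((m+2*j+2).factorial) := by
    have : m+2*j+4 = (m+2*j+2) + 1 + 1 := by omega
    rw [this]; push_cast [Nat.factorial_succ]; ring
  have f2 : ((m+2*j+3).factorial : ℝ) = (m+2*j+3) * ((m+2*j+2).factorial) := by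
    have : m+2*j+3 = (m+2*j+2) + 1 := by omega
    rw [this]; push_cast [Nat.factorial_succ]; ring
  have f3 : ((2*j+2).factorial : ℝ) = (2*j+2) * (2*j+1) * ((2*j).factorial) := by
    have : 2*j+2 = (2*j) + 1 + 1 := by omega
    rw [this]; push_cast [Nat.factorial_succ]; ring
  have f4 : ((j+1).factorial : ℝ) = (j+1) * (j.factorial) := by
    push_cast [Nat.factorial_succ]; ring
  have f5 : ((m+2).factorial : ℝ) = (m+2) * (m+1) * (m.factorial) := by
    have : m+2 = m + 1 + 1 := by omega
    rw [this]; push_cast [Nat.factorial_succ]; ring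
  have f6 : ((m+1).factorial : ℝ) = (m+1) * (m.factorial) := by
    push_cast [Nat.factorial_succ]; ring
  rw [f1, f2, f3, f4, f5, f6]
  have p1 : ((m+2*j+2).factorial : ℝ) ≠ 0 := by positivity
  have p2 : ((2*j).factorial : ℝ) ≠ 0 := by positivity
  have p3 : (j.factorial : ℝ) ≠ 0 := by positivity
  have p4 : (m.factorial : ℝ) ≠ 0 := by positivity
  push_cast
  field_simp
  ring

lemma central_cast (j : ℕ) :
    ((j:ℝ)+1) * ((2*j+2).choose (j+1)) = 2*(2*(j:ℝ)+1) * ((2*j).choose j) := by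
  have h := Nat.succ_mul_centralBinom_succ j
  have e1 : (2*(j+1)).choose (j+1) = (2*j+2).choose (j+1) := by norm_num [Nat.mul_succ]
  unfold Nat.centralBinom at h
  rw [e1] at h
  exact_mod_cast congrArg (Nat.cast : ℕ → ℝ) h

lemma trm_rec (b c : ℝ) (n k : ℕ) :
    ((n:ℝ)+2) * trm b c (n+2) k + ((n:ℝ)+1) * b^2 * trm b c n k
    = (2*(n:ℝ)+3) * b * trm b c (n+1) k
      + 4*((n:ℝ)+1)*c * (if k = 0 then 0 else trm b c n (k-1)) := by
  rcases k with _ | j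
  · simp only [trm, Nat.mul_zero, Nat.choose_zero_right, Nat.choose_self, if_true,
      Nat.sub_zero, pow_zero]
    push_cast
    rw [show n+2 = n+1+1 from rfl, pow_succ, pow_succ]
    ring
  · simp only [Nat.succ_ne_zero, if_false, Nat.succ_sub_one]
    rcases Nat.lt_or_ge n (2*j) with h | h
    · have z1 : n + 2 < 2*(j+1) := by omega
      have z2 : n < 2*(j+1) := by omega
      have z3 : n + 1 < 2*(j+1) := by omega
      have z4 : n < 2*j := by omega
      simp [trm, Nat.choose_eq_zero_of_lt, z1, z2, z3, z4]
    · rcases Nat.lt_or_ge n (2*j+2) with h2 | h2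
      · rcases Nat.eq_or_lt_of_le h with h3 | h3
        · -- n = 2j
          obtain rfl : n = 2*j := h3.symm
          have z1 : 2*j < 2*(j+1) := by omega
          have z2 : 2*j+1 < 2*(j+1) := by omega
          have e1 : 2*j+2 - 2*(j+1) = 0 := by omega
          have e2 : 2*j - 2*j = 0 := by omega
          have e3 : (2*j+2).choose (2*(j+1)) = 1 := by
            rw [show 2*(j+1) = 2*j+2 from by omega]; exact Nat.choose_self _
          have e4 : (2*j).choose (2*j) = 1 := Nat.choose_self _
          simp only [trm, Nat.choose_eq_zero_of_lt z1, Nat.choose_eq_zero_of_lt z2,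
            e1, e2, e3, e4, pow_zero, Nat.cast_zero, Nat.cast_one]
          have hc := central_cast j
          rw [show 2*(j+1) = 2*j+2 from by omega]
          push_cast
          linear_combination (2*c^(j+1)) * hc
        · -- n = 2j+1
          obtain rfl : n = 2*j+1 := by omega
          have z2 : 2*j+1 < 2*(j+1) := by omega
          have e1 : 2*j+1+2 - 2*(j+1) = 1 := by omega
          have e3 : 2*j+1+1 - 2*(j+1) = 0 := by omega
          have e4 : 2*j+1 - 2*j = 1 := by omega
          have e5 : (2*j+1+2).choose (2*(j+1)) = 2*j+3 := by
            rw [show 2*j+1+2 = (2*j+2)+1 from by omega, show 2*(j+1) = 2*j+2 from by omega]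
            exact Nat.choose_succ_self_right _
          have e6 : (2*j+1+1).choose (2*(j+1)) = 1 := by
            rw [show 2*(j+1) = 2*j+1+1 from by omega]; exact Nat.choose_self _
          have e7 : (2*j+1).choose (2*j) = 2*j+1 := by
            exact Nat.choose_succ_self_right _
          simp only [trm, Nat.choose_eq_zero_of_lt z2, e1, e3, e4, e5, e6, e7,
            pow_zero, pow_one, Nat.cast_zero, Nat.cast_one]
          have hc := central_cast j
          rw [show 2*(j+1) = 2*j+2 from by omega]
          push_cast
          linear_combination (4*((j:ℝ)+1)*b*c^(j+1)) * hc
      · -- main case : n ≥ 2j+2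
        obtain ⟨m, rfl⟩ : ∃ m, n = m + 2*j + 2 := ⟨n - (2*j+2), by omega⟩
        have e1 : m+2*j+2+2 - 2*(j+1) = m+2 := by omega
        have e2 : m+2*j+2 - 2*(j+1) = m := by omega
        have e3 : m+2*j+2+1 - 2*(j+1) = m+1 := by omega
        have e4 : m+2*j+2 - 2*j = m+2 := by omega
        simp only [trm, e1, e2, e3, e4]
        have key := key_main m j
        have c1 : m+2*j+2+2 = m+2*j+4 := by omega
        have c2 : m+2*j+2+1 = m+2*j+3 := by omega
        rw [c1, c2]
        have c3 : (2*(j+1)) = 2*j+2 := by omega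
        rw [c3]
        push_cast at key ⊢
        linear_combination (b^(m+2)*c^(j+1)) * key

lemma genCT_rec (b c : ℝ) (n : ℕ) :
    ((n:ℝ)+2) * genCT b c (n+2) + ((n:ℝ)+1) * b^2 * genCT b c n
    = (2*(n:ℝ)+3) * b * genCT b c (n+1) + 4*((n:ℝ)+1)*c * genCT b c n := by
  have e2 := genCT_eq_sum b c (n+2) (n+3) (by omega)
  have e1 := genCT_eq_sum b c (n+1) (n+3) (by omega)
  have e0 := genCT_eq_sum b c n (n+3) (by omega)
  have e0' := genCT_eq_sum b c n (n+2) (by omega)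
  have hshift : ∑ k ∈ Finset.range (n+3), (if k = 0 then (0:ℝ) else trm b c n (k-1))
      = genCT b c n := by
    rw [Finset.sum_range_succ']
    simp only [Nat.succ_ne_zero, if_false, Nat.succ_sub_one, if_true, add_zero]
    exact e0'.symm
  have H : ∑ k ∈ Finset.range (n+3),
        (((n:ℝ)+2) * trm b c (n+2) k + ((n:ℝ)+1) * b^2 * trm b c n k)
      = ∑ k ∈ Finset.range (n+3),
        ((2*(n:ℝ)+3) * b * trm b c (n+1) k
          + 4*((n:ℝ)+1)*c * (if k = 0 then 0 else trm b c n (k-1))) :=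
    Finset.sum_congr rfl (fun k _ => trm_rec b c n k)
  rw [Finset.sum_add_distrib, Finset.sum_add_distrib, ← Finset.mul_sum, ← Finset.mul_sum,
    ← Finset.mul_sum, ← Finset.mul_sum, hshift, ← e2, ← e1, ← e0] at H
  linarith [H]

lemma genCT_zero (b c : ℝ) : genCT b c 0 = 1 := by simp [genCT]

lemma genCT_one (b c : ℝ) : genCT b c 1 = b := by simp [genCT]

lemma genCT_two (b c : ℝ) : genCT b c 2 = b^2 + 2*c := by
  norm_num [genCT, Finset.sum_range_succ]

lemma genCT_three (b c : ℝ) : genCT b c 3 = b^3 + 6*b*c := by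
  norm_num [genCT, Finset.sum_range_succ]

lemma genCT_four (b c : ℝ) : genCT b c 4 = b^4 + 12*b^2*c + 6*c^2 := by
  norm_num [genCT, Finset.sum_range_succ, show Nat.choose 4 2 = 6 from by decide]

lemma genCT_five (b c : ℝ) : genCT b c 5 = b^5 + 20*b^3*c + 30*b*c^2 := by
  norm_num [genCT, Finset.sum_range_succ, show Nat.choose 4 2 = 6 from by decide,
    show Nat.choose 5 2 = 10 from by decide]

lemma genCT_six (b c : ℝ) : genCT b c 6 = b^6 + 30*b^4*c + 90*b^2*c^2 + 20*c^3 := by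
  norm_num [genCT, Finset.sum_range_succ, show Nat.choose 4 2 = 6 from by decide,
    show Nat.choose 6 2 = 15 from by decide, show Nat.choose 6 4 = 15 from by decide,
    show Nat.choose 6 3 = 20 from by decide]

lemma genCT_pos {b c : ℝ} (hb : 0 < b) (hc : 0 < c) (n : ℕ) : 0 < genCT b c n := by
  rw [genCT]
  apply Finset.sum_pos'
  · intro k _
    have h1 : (0:ℝ) ≤ (Nat.choose n (2*k) : ℝ) := by positivity
    have h2 : (0:ℝ) ≤ ((2*k).choose k : ℝ) := by positivity
    have h3 : (0:ℝ) ≤ b ^ (n - 2*k) := by positivity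
    have h4 : (0:ℝ) ≤ c ^ k := by positivity
    positivity
  · refine ⟨0, Finset.mem_range.2 (by omega), ?_⟩
    norm_num
    positivity



lemma stepL (b s x y z M : ℝ) (hb : 0 < b) (hs : 0 < s) (h2s : 2*s^2 ≤ b^2)
    (hb2s : b < 2*s) (hM : 0 ≤ M) (hx : 0 < x) (hy : 0 < y) (hz : 0 < z)
    (hrec : ((M+2)+2)*z = (2*(M+2)+3)*b*y + ((M+2)+1)*(4*s^2-b^2)*x)
    (ihU : 20*(M+2)^2*y ≤ (20*(M+2)^2-10*(M+2)+13)*(b+2*s)*x) :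
    (2*(M+3)-1)*(b+2*s)*y ≤ 2*(M+3)*z := by
  have hq : 0 < 4*s^2 - b^2 := by nlinarith
  have hr : 0 < b + 2*s := by linarith
  have hbs := mul_pos hb hs
  have hD : (0:ℝ) < 20*(M+2)^2-10*(M+2)+13 := by nlinarith
  have hS := mul_le_mul_of_nonneg_left ihU hq.le
  have hF2 : 0 ≤ (M+3)^2*(16*b^2+80*b*s+96*s^2)
      - (M+3)*(7*b^2+200*b*s+372*s^2) + 43*(b+2*s)^2 := by
    nlinarith [mul_nonneg (mul_nonneg hM hM) (sq_nonneg b),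
      mul_nonneg (mul_nonneg hM hM) hbs.le,
      mul_nonneg (mul_nonneg hM hM) (sq_nonneg s),
      mul_nonneg hM (sq_nonneg b), mul_nonneg hM hbs.le, mul_nonneg hM (sq_nonneg s),
      h2s, hbs, sq_nonneg b, sq_nonneg s]
  have hp : (0:ℝ) < ((M+4))*((20*(M+2)^2-10*(M+2)+13)*(b+2*s)) := by positivity
  refine le_of_mul_le_mul_left ?_ hp
  have e1 : 2*(M+3)*((20*(M+2)^2-10*(M+2)+13)*(b+2*s))*(((M+2)+2)*z)
      = 2*(M+3)*((20*(M+2)^2-10*(M+2)+13)*(b+2*s))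
        *((2*(M+2)+3)*b*y + ((M+2)+1)*(4*s^2-b^2)*x) := by rw [hrec]
  have hNN : (0:ℝ) ≤ 2*(M+3)^2 := by positivity
  have hS2 := mul_le_mul_of_nonneg_left hS hNN
  nlinarith [e1, hS2, mul_nonneg hF2 (mul_nonneg hr.le hy.le)]

lemma stepU (b s x y z M : ℝ) (hb : 0 < b) (hs : 0 < s) (h2s : 2*s^2 ≤ b^2)
    (hb2s : b < 2*s) (hM : 0 ≤ M) (hx : 0 < x) (hy : 0 < y) (hz : 0 < z)
    (hrec : ((M+2)+2)*z = (2*(M+2)+3)*b*y + ((M+2)+1)*(4*s^2-b^2)*x)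
    (ihL : (2*(M+2)-1)*(b+2*s)*x ≤ 2*(M+2)*y) :
    20*(M+3)^2*z ≤ (20*(M+3)^2-10*(M+3)+13)*(b+2*s)*y := by
  have hq : 0 < 4*s^2 - b^2 := by nlinarith
  have hr : 0 < b + 2*s := by linarith
  have h34 : 0 ≤ 3*b - 4*s := by nlinarith
  have hS := mul_le_mul_of_nonneg_left ihL hq.le
  have hF1 : 0 ≤ 12*(M+3)^2*(3*b-4*s) + (17*(M+3)-39)*(b+2*s) := by
    nlinarith [mul_nonneg (sq_nonneg (M+3)) h34,
      mul_nonneg (by linarith : (0:ℝ) ≤ 17*M+12) hr.le]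
  have hp : (0:ℝ) < ((M+4))*((2*(M+2)-1)*(b+2*s)) := by
    have : (0:ℝ) < 2*(M+2)-1 := by linarith
    positivity
  refine le_of_mul_le_mul_left ?_ hp
  have e1 : 20*(M+3)^2*((2*(M+2)-1)*(b+2*s))*(((M+2)+2)*z)
      = 20*(M+3)^2*((2*(M+2)-1)*(b+2*s))
        *((2*(M+2)+3)*b*y + ((M+2)+1)*(4*s^2-b^2)*x) := by rw [hrec]
  have hNN : (0:ℝ) ≤ 20*(M+3)^3 := by positivity
  have hS2 := mul_le_mul_of_nonneg_left hS hNN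
  nlinarith [e1, hS2, mul_nonneg (mul_nonneg hr.le hF1) hy.le]

lemma stepM (b s x y z N : ℝ) (hb : 0 < b) (hs : 0 < s) (h2s : 2*s^2 ≤ b^2)
    (hb2s : b < 2*s) (hN : 5 ≤ N) (hx : 0 < x) (hy : 0 < y) (hz : 0 < z)
    (hrec : (N+2)*z = (2*N+3)*b*y + (N+1)*(4*s^2-b^2)*x)
    (HL : (2*N-1)*(b+2*s)*x ≤ 2*N*y)
    (HU : 20*N^2*y ≤ (20*N^2-10*N+13)*(b+2*s)*x) :
    y^2 ≤ x*z := by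
  have hq : 0 < 4*s^2 - b^2 := by nlinarith
  have hr : 0 < b + 2*s := by linarith
  have hbs := mul_pos hb hs
  have hm : (0:ℝ) ≤ N - 5 := by linarith
  have hA : 0 ≤ 2*N*y - (2*N-1)*(b+2*s)*x := by linarith
  have hB : 0 ≤ (20*N^2-10*N+13)*(b+2*s)*x - 20*N^2*y := by linarith
  have hF3 : 0 ≤ N*(b^2+16*b*s+28*s^2) - 2*(b+2*s)^2 := by
    nlinarith [hbs, sq_nonneg s, sq_nonneg b,
      mul_nonneg hm (sq_nonneg b), mul_nonneg hm hbs.le, mul_nonneg hm (sq_nonneg s)]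
  have hF4 : 0 ≤ N^3*(100*b^2+560*b*s+720*s^2) - N^2*(200*b^2+2360*b*s+3920*s^2)
      + 351*N*(b+2*s)^2 - 338*(b+2*s)^2 := by
    have hmm : (0:ℝ) ≤ (N-5)*(N-5) := mul_self_nonneg _
    have hmmm : (0:ℝ) ≤ (N-5)*(N-5)*(N-5) := mul_nonneg hmm hm
    nlinarith [h2s, hbs, sq_nonneg b, sq_nonneg s,
      mul_nonneg hmmm (sq_nonneg b), mul_nonneg hmmm hbs.le, mul_nonneg hmmm (sq_nonneg s),
      mul_nonneg hmm (sq_nonneg b), mul_nonneg hmm hbs.le, mul_nonneg hmm (sq_nonneg s),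
      mul_nonneg hm (sq_nonneg b), mul_nonneg hm hbs.le, mul_nonneg hm (sq_nonneg s)]
  have hval : 0 ≤ (2*N+3)*b*x*y + (N+1)*(4*s^2-b^2)*x^2 - (N+2)*y^2 := by
    have hid : 520*N^3*((b+2*s)*x)*((2*N+3)*b*x*y + (N+1)*(4*s^2-b^2)*x^2 - (N+2)*y^2)
        = 10*N*(N*(b^2+16*b*s+28*s^2) - 2*(b+2*s)^2)*x^2
            *((20*N^2-10*N+13)*(b+2*s)*x - 20*N^2*y)
          + (N^3*(100*b^2+560*b*s+720*s^2) - N^2*(200*b^2+2360*b*s+3920*s^2)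
              + 351*N*(b+2*s)^2 - 338*(b+2*s)^2)*x^2*(2*N*y - (2*N-1)*(b+2*s)*x)
          + 13*(N+2)*((b+2*s)*x)*(2*N*y - (2*N-1)*(b+2*s)*x)
              *((20*N^2-10*N+13)*(b+2*s)*x - 20*N^2*y) := by
      ring
    have hrhs : 0 ≤ 10*N*(N*(b^2+16*b*s+28*s^2) - 2*(b+2*s)^2)*x^2
            *((20*N^2-10*N+13)*(b+2*s)*x - 20*N^2*y)
          + (N^3*(100*b^2+560*b*s+720*s^2) - N^2*(200*b^2+2360*b*s+3920*s^2)
              + 351*N*(b+2*s)^2 - 338*(b+2*s)^2)*x^2*(2*N*y - (2*N-1)*(b+2*s)*x)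
          + 13*(N+2)*((b+2*s)*x)*(2*N*y - (2*N-1)*(b+2*s)*x)
              *((20*N^2-10*N+13)*(b+2*s)*x - 20*N^2*y) := by
      have t1 : (0:ℝ) ≤ 10*N := by linarith
      have t2 : (0:ℝ) ≤ 13*(N+2) := by linarith
      refine add_nonneg (add_nonneg ?_ ?_) ?_
      · exact mul_nonneg (mul_nonneg (mul_nonneg t1 hF3) (sq_nonneg x)) hB
      · exact mul_nonneg (mul_nonneg hF4 (sq_nonneg x)) hA
      · exact mul_nonneg (mul_nonneg (mul_nonneg t2 (mul_nonneg hr.le hx.le)) hA) hB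
    have hXpos : (0:ℝ) < 520*N^3*((b+2*s)*x) := by
      have hN0 : (0:ℝ) < N := by linarith
      positivity
    nlinarith [hid, hrhs, hXpos]
  nlinarith [hrec, hval, hx, mul_pos hx hz, (by linarith : (0:ℝ) < N+2),
    mul_le_mul_of_nonneg_left hrec.le hx.le, mul_le_mul_of_nonneg_left hrec.ge hx.le]


lemma caseA (b c : ℝ) (hb : 0 < b) (hc : 0 < c) (h4 : 4*c ≤ b^2) :
    ∀ n : ℕ, genCT b c (n+1)^2 ≤ genCT b c n * genCT b c (n+2) := by
  set T := genCT b c with hTdef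
  have hT : ∀ n, 0 < T n := genCT_pos hb hc
  have hrecT : ∀ n : ℕ, ((n:ℝ)+2) * T (n+2)
      = (2*(n:ℝ)+3) * b * T (n+1) - ((n:ℝ)+1)*(b^2 - 4*c) * T n := by
    intro n
    have := genCT_rec b c n
    simp only [← hTdef] at this
    linarith [this]
  have I1 : ∀ n : ℕ, b * T n ≤ T (n+1) := by
    intro n
    induction n with
    | zero =>
      rw [hTdef, genCT_zero, genCT_one]; linarith
    | succ n ih =>
      have hrec := hrecT n
      have hN : (0:ℝ) < (n:ℝ) + 2 := by positivity
      have hmul := mul_le_mul_of_nonneg_left ih hb.le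
      have hkey : 0 ≤ ((n:ℝ)+1) * (b*T (n+1) - (b^2-4*c)*T n) :=
        mul_nonneg (by positivity) (by nlinarith [hmul, hT n, hc])
      nlinarith [hrec, hkey, hN]
  intro n
  induction n with
  | zero =>
    rw [hTdef, genCT_zero, genCT_one, genCT_two]; nlinarith [hc]
  | succ n ih =>
    -- M(n+1): T(n+2)^2 ≤ T(n+1) * T(n+3)
    have A1 := hrecT (n+1)
    have A2 := hrecT n
    have en1 : n+1+1 = n+2 := rfl
    have en2 : n+1+2 = n+3 := rfl
    rw [en1, en2] at A1
    push_cast at A1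
    have hd : (0:ℝ) ≤ b^2 - 4*c := by linarith
    have hz := I1 (n+1)   -- b*T(n+1) ≤ T(n+2)
    have hprod1 : 0 ≤ (b^2-4*c) * (T n * T (n+2) - T (n+1)^2) :=
      mul_nonneg hd (by linarith [ih])
    have hprod2 : 0 ≤ (T (n+2) - b * T (n+1)) * T (n+2) :=
      mul_nonneg (by linarith) (hT (n+2)).le
    -- scaled equalities
    have e1 : ((n:ℝ)+1) * T (n+1) * (((n:ℝ)+3) * T (n+3))
        = ((n:ℝ)+1) * T (n+1) * ((2*(n:ℝ)+5) * b * T (n+2) - ((n:ℝ)+2)*(b^2-4*c) * T (n+1)) := by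
      have h' : ((n:ℝ)+3) * T (n+3) = (2*(n:ℝ)+5) * b * T (n+2) - ((n:ℝ)+2)*(b^2-4*c) * T (n+1) := by
        linarith [A1]
      rw [h']
    have e2 : ((n:ℝ)+2) * T (n+2) * (((n:ℝ)+1)*(b^2-4*c) * T n)
        = ((n:ℝ)+2) * T (n+2) * ((2*(n:ℝ)+3) * b * T (n+1) - ((n:ℝ)+2) * T (n+2)) := by
      have : ((n:ℝ)+1)*(b^2-4*c) * T n = (2*(n:ℝ)+3) * b * T (n+1) - ((n:ℝ)+2) * T (n+2) := by
        linarith [A2]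
      rw [this]
    have hNN : (0:ℝ) < ((n:ℝ)+1) * ((n:ℝ)+2) := by positivity
    have hprod3 : 0 ≤ (((n:ℝ)+1) * ((n:ℝ)+2)) * ((b^2-4*c) * (T n * T (n+2) - T (n+1)^2)) :=
      mul_nonneg hNN.le hprod1
    nlinarith [e1, e2, hprod3, hprod2, hT (n+1), hT (n+2), hT (n+3),
      mul_pos (hT (n+1)) (hT (n+3)), sq_nonneg (T (n+2))]


lemma caseB (b c : ℝ) (hb : 0 < b) (hc : 0 < c) (h2 : 2*c ≤ b^2) (h4 : b^2 < 4*c) :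
    ∀ n : ℕ, genCT b c (n+1)^2 ≤ genCT b c n * genCT b c (n+2) := by
  obtain ⟨s, hs, rfl⟩ : ∃ s : ℝ, 0 < s ∧ c = s^2 :=
    ⟨Real.sqrt c, Real.sqrt_pos.2 hc, (Real.sq_sqrt hc.le).symm⟩
  set T := genCT b (s^2) with hTdef
  have hT : ∀ n, 0 < T n := genCT_pos hb hc
  have h2s : 2*s^2 ≤ b^2 := h2
  have hb2s : b < 2*s := by nlinarith
  have hrecT : ∀ n : ℕ, ((n:ℝ)+2) * T (n+2)
      = (2*(n:ℝ)+3)*b*T (n+1) + ((n:ℝ)+1)*(4*s^2 - b^2) * T n := by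
    intro n
    have h := genCT_rec b (s^2) n
    simp only [← hTdef] at h
    linarith [h]
  have recm : ∀ m : ℕ, ((m:ℝ)+2+2) * T (m+4)
      = (2*((m:ℝ)+2)+3)*b*T (m+3) + ((m:ℝ)+2+1)*(4*s^2 - b^2) * T (m+2) := by
    intro m
    have h := hrecT (m+2)
    push_cast at h
    exact h
  have hT0 : T 0 = 1 := genCT_zero b (s^2)
  have hT1 : T 1 = b := genCT_one b (s^2)
  have hT2 : T 2 = b^2 + 2*s^2 := genCT_two b (s^2)
  have hT3 : T 3 = b^3 + 6*b*s^2 := genCT_three b (s^2)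
  have hT4 : T 4 = b^4 + 12*b^2*s^2 + 6*(s^2)^2 := genCT_four b (s^2)
  have hT5 : T 5 = b^5 + 20*b^3*s^2 + 30*b*(s^2)^2 := genCT_five b (s^2)
  have hT6 : T 6 = b^6 + 30*b^4*s^2 + 90*b^2*(s^2)^2 + 20*(s^2)^3 := genCT_six b (s^2)
  have hbs := mul_pos hb hs
  have h34 : 0 ≤ 3*b - 4*s := by nlinarith
  have LU : ∀ m : ℕ,
      (2*((m:ℝ)+2)-1)*(b+2*s)*T (m+2) ≤ 2*((m:ℝ)+2)*T (m+3) ∧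
      20*((m:ℝ)+2)^2*T (m+3) ≤ (20*((m:ℝ)+2)^2-10*((m:ℝ)+2)+13)*(b+2*s)*T (m+2) := by
    intro m
    induction m with
    | zero =>
      norm_num
      rw [hT2, hT3]
      constructor
      · nlinarith [mul_nonneg h34 (sq_nonneg b),
          mul_nonneg (mul_nonneg (by linarith : (0:ℝ) ≤ 2*s - b) h34) hs.le,
          mul_nonneg (by linarith : (0:ℝ) ≤ 2*s - b) (sq_nonneg s),
          mul_nonneg hb.le (sq_nonneg s)]
      · nlinarith [mul_nonneg (by linarith : (0:ℝ) ≤ 2*s - b) (sq_nonneg b),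
          sq_nonneg (132*b - 167*s), mul_nonneg hs.le (sq_nonneg s), hs, hb,
          mul_nonneg hs.le (sq_nonneg b), mul_nonneg hb.le (sq_nonneg s)]
    | succ m ih =>
      obtain ⟨ihL, ihU⟩ := ih
      have hm0 : (0:ℝ) ≤ ((m:ℝ)+1) := by positivity
      constructor
      · have h := stepL b s (T (m+2)) (T (m+3)) (T (m+4)) (m:ℝ) hb hs h2s hb2s
          (Nat.cast_nonneg m) (hT _) (hT _) (hT _) (recm m) ihU
        push_cast
        linarith [h]
      · have h := stepU b s (T (m+2)) (T (m+3)) (T (m+4)) (m:ℝ) hb hs h2s hb2s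
          (Nat.cast_nonneg m) (hT _) (hT _) (hT _) (recm m) ihL
        push_cast
        nlinarith [h]
  intro n
  match n with
  | 0 => rw [hT0, hT1, hT2]; nlinarith [sq_nonneg s]
  | 1 => rw [hT1, hT2, hT3]; nlinarith [h2s, sq_nonneg s, sq_nonneg (s*s), mul_pos hs hs]
  | 2 => rw [hT2, hT3, hT4]
         nlinarith [mul_nonneg (sq_nonneg (2*b^2-3*s^2)) (sq_nonneg s),
           mul_nonneg (sq_nonneg (s*s)) (sq_nonneg s), sq_nonneg s, sq_nonneg (s*s)]
  | 3 => rw [hT3, hT4, hT5]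
         have hzz : (0:ℝ) ≤ b^2-2*s^2 := by linarith
         have hq2 : (0:ℝ) ≤ b^4-b^2*s^2+16*s^4 := by
           nlinarith [sq_nonneg (2*b^2-s^2), sq_nonneg (s*s)]
         nlinarith [mul_nonneg (mul_nonneg hzz hq2) (sq_nonneg s),
           mul_nonneg (sq_nonneg (s*s)) (sq_nonneg (s*s)),
           mul_nonneg (mul_nonneg (sq_nonneg (s*s)) (sq_nonneg s)) (sq_nonneg s)]
  | 4 => rw [hT4, hT5, hT6]
         have hzz : (0:ℝ) ≤ b^2-2*s^2 := by linarith
         have h23 : (0:ℝ) ≤ 2*b^2-3*s^2 := by linarith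
         nlinarith [mul_nonneg (mul_nonneg (mul_nonneg hzz (sq_nonneg b)) (sq_nonneg b)) (sq_nonneg (b*s)),
           mul_nonneg (mul_nonneg (mul_nonneg h23 (sq_nonneg b)) (sq_nonneg (s*s))) (sq_nonneg s),
           mul_nonneg (sq_nonneg (s*s)) (mul_nonneg (sq_nonneg (s*s)) (sq_nonneg s))]
  | (k+5) =>
    obtain ⟨HL, HU⟩ := LU (k+3)
    push_cast at HL HU
    have HL' : (2*((k:ℝ)+5)-1)*(b+2*s)*T (k+5) ≤ 2*((k:ℝ)+5)*T (k+6) := by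
      have h : (2*((k:ℝ)+3+2)-1)*(b+2*s)*T (k+5) ≤ 2*((k:ℝ)+3+2)*T (k+6) := HL
      linarith [h]
    have HU' : 20*((k:ℝ)+5)^2*T (k+6)
        ≤ (20*((k:ℝ)+5)^2-10*((k:ℝ)+5)+13)*(b+2*s)*T (k+5) := by
      have h : 20*((k:ℝ)+3+2)^2*T (k+6)
          ≤ (20*((k:ℝ)+3+2)^2-10*((k:ℝ)+3+2)+13)*(b+2*s)*T (k+5) := HU
      nlinarith [h]
    have hrec' : (((k:ℝ)+5)+2)*T (k+7)
        = (2*((k:ℝ)+5)+3)*b*T (k+6) + (((k:ℝ)+5)+1)*(4*s^2-b^2)*T (k+5) := by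
      have h := hrecT (k+5)
      push_cast at h
      exact h
    have hN5 : (5:ℝ) ≤ (k:ℝ)+5 := by
      have : (0:ℝ) ≤ (k:ℝ) := Nat.cast_nonneg k
      linarith
    exact stepM b s (T (k+5)) (T (k+6)) (T (k+7)) ((k:ℝ)+5) hb hs h2s hb2s hN5
      (hT _) (hT _) (hT _) hrec' HL' HU'


/-- for `b, c > 0`, the sequence `(T_n(b,c))_{n≥0}` is log-convex
(`T_i T_{j+1} ≥ T_{i+1} T_j` for all `0 ≤ i < j`) if and only if `b² ≥ 2c`. -/
theorem genCT_logConvex_iff (b c : ℝ) (hb : 0 < b) (hc : 0 < c) :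
    (∀ i j : ℕ, i < j → genCT b c (i + 1) * genCT b c j ≤ genCT b c i * genCT b c (j + 1)) ↔
      2 * c ≤ b ^ 2 := by
  constructor
  · intro H
    have h12 := H 1 2 (by norm_num)
    rw [genCT_one, genCT_two, genCT_three] at h12
    nlinarith [hc, h12]
  · intro h2 i j hij
    have hT : ∀ n, 0 < genCT b c n := genCT_pos hb hc
    have M : ∀ n : ℕ, genCT b c (n+1)^2 ≤ genCT b c n * genCT b c (n+2) := by
      rcases le_or_gt (4*c) (b^2) with h4 | h4
      · exact caseA b c hb hc h4
      · exact caseB b c hb hc h2 h4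
    have key : ∀ d k : ℕ, genCT b c (k+1) * genCT b c (k+d) ≤ genCT b c k * genCT b c (k+d+1) := by
      intro d
      induction d with
      | zero => intro k; simp [mul_comm]
      | succ d ih =>
        intro k
        have H1 := ih k
        have H2 := M (k+d)
        have H3 : (genCT b c (k+1) * genCT b c (k+d)) * (genCT b c (k+d+1)^2)
            ≤ (genCT b c k * genCT b c (k+d+1)) * (genCT b c (k+d) * genCT b c (k+d+2)) := by
          exact mul_le_mul H1 H2 (sq_nonneg _) (mul_nonneg (hT _).le (hT _).le)
        have hp : 0 < genCT b c (k+d) * genCT b c (k+d+1) := mul_pos (hT _) (hT _)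
        show genCT b c (k+1) * genCT b c (k+d+1) ≤ genCT b c k * genCT b c (k+d+2)
        nlinarith [H3, hp, hT k, hT (k+1), hT (k+d), hT (k+d+1), hT (k+d+2),
          mul_pos (hT (k+1)) (hT ((k+d)+1))]
    obtain ⟨d, rfl⟩ : ∃ d, j = i + d := ⟨j - i, by omega⟩
    exact key d i
end

section
/- Let b > 0 and c > 0. The sequence (T_n(b,c))_{n≥0} is a Stieltjes moment sequence (i.e., there exists a nonnegative Borel measure μ on [0,∞) with T_n(b,c) = ∫_0^∞ x^n dμ(x) for all n ≥ 0) if and only if b² ≥ 4c. -/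
open MeasureTheory Real intervalIntegral Finset

lemma cospow_odd : ∀ k : ℕ, (∫ x in (0:ℝ)..π, cos x ^ (2*k+1)) = 0 := by
  intro k
  induction k with
  | zero => simp
  | succ j ih =>
    have h := integral_cos_pow (a := (0:ℝ)) (b := π) (n := 2*j+1)
    have : 2*(j+1)+1 = (2*j+1)+2 := by ring
    rw [this, h]
    simp [ih]

lemma cospow_even : ∀ k : ℕ, (∫ x in (0:ℝ)..π, cos x ^ (2*k)) = π * ((2*k).choose k) / 4^k := by
  intro k
  induction k with
  | zero => simp
  | succ j ih =>
    have h := integral_cos_pow (a := (0:ℝ)) (b := π) (n := 2*j)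
    have h2 : 2*(j+1) = (2*j)+2 := by ring
    rw [h2, h, ih]
    have hcb := Nat.succ_mul_centralBinom_succ j
    have hcb' : ((j:ℝ)+1) * ((2*j+2).choose (j+1)) = 2 * (2*(j:ℝ)+1) * ((2*j).choose j) := by
      have : 2*(j+1) = 2*j+2 := by ring
      rw [← this]
      exact_mod_cast congrArg (Nat.cast (R := ℝ)) hcb
    have h4 : (4:ℝ)^(j+1) = 4^j * 4 := by ring
    simp only [sin_pi, sin_zero, mul_zero, sub_zero, zero_div, zero_add]
    rw [h4]
    push_cast at hcb' ⊢
    field_simp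
    linear_combination (-2) * hcb'

lemma trig_rep (b c : ℝ) (hc : 0 < c) (n : ℕ) :
    (∫ θ in (0:ℝ)..π, (b + 2*Real.sqrt c*Real.cos θ)^n) = π * genCT b c n := by
  have key : (∫ θ in (0:ℝ)..π, (b + 2*Real.sqrt c*Real.cos θ)^n)
      = ∑ j ∈ range (n+1),
          (2*Real.sqrt c)^j * b^(n-j) * (n.choose j) * ∫ θ in (0:ℝ)..π, Real.cos θ^j := by
    have hexp : Set.EqOn (fun θ => (b + 2*Real.sqrt c*Real.cos θ)^n)
        (fun θ => ∑ j ∈ range (n+1), (2*Real.sqrt c)^j * b^(n-j) * (n.choose j) * Real.cos θ^j)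
        (Set.uIcc 0 π) := by
      intro θ _
      simp only
      rw [add_comm, add_pow]
      refine Finset.sum_congr rfl fun j _ => ?_
      rw [mul_pow]; ring
    rw [intervalIntegral.integral_congr hexp,
        intervalIntegral.integral_finset_sum
          (fun j _ => (Continuous.intervalIntegrable (by fun_prop) _ _))]
    exact Finset.sum_congr rfl fun j _ => intervalIntegral.integral_const_mul _ _
  rw [key]
  have hsub : (range (n/2+1)).image (fun k => 2*k) ⊆ range (n+1) := by
    intro j hj; simp only [Finset.mem_image, Finset.mem_range] at hj ⊢; omega
  have hzero : ∀ j ∈ range (n+1), j ∉ (range (n/2+1)).image (fun k => 2*k) →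
      (2*Real.sqrt c)^j * b^(n-j) * (n.choose j) * (∫ θ in (0:ℝ)..π, Real.cos θ^j) = 0 := by
    intro j hj hj2
    have hodd : ∃ r, j = 2*r+1 := by
      rcases Nat.even_or_odd j with he | ho
      · exfalso; obtain ⟨r, hr⟩ := he; apply hj2
        simp only [Finset.mem_image, Finset.mem_range] at hj ⊢
        exact ⟨r, by omega, by omega⟩
      · obtain ⟨r, hr⟩ := ho; exact ⟨r, by omega⟩
    obtain ⟨r, rfl⟩ := hodd
    rw [cospow_odd r, mul_zero]
  rw [← Finset.sum_subset hsub hzero,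
      Finset.sum_image (fun a _ b _ h => by omega)]
  rw [genCT, Finset.mul_sum]
  refine Finset.sum_congr rfl fun k hk => ?_
  rw [cospow_even k]
  have h1 : (2*Real.sqrt c)^(2*k) = 4^k * c^k := by
    rw [pow_mul, show (2*Real.sqrt c)^2 = 4*c by
      rw [mul_pow, Real.sq_sqrt hc.le]; ring, mul_pow]
  rw [h1]
  have h4 : (4:ℝ)^k ≠ 0 := by positivity
  field_simp

lemma one_sub_cos_pos (k : ℕ) : 0 < ∫ θ in (0:ℝ)..π, (1 - Real.cos θ)^k := by
  apply intervalIntegral.intervalIntegral_pos_of_pos_on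
    (Continuous.intervalIntegrable (by fun_prop) _ _) _ Real.pi_pos
  intro x hx
  have h1 : Real.cos x < Real.cos 0 :=
    Real.cos_lt_cos_of_nonneg_of_le_pi le_rfl hx.2.le hx.1
  rw [Real.cos_zero] at h1
  have : 0 < 1 - Real.cos x := by linarith
  positivity

lemma one_sub_cos_rec (k : ℕ) :
    ((k:ℝ)+1) * (∫ θ in (0:ℝ)..π, (1 - Real.cos θ)^(k+1))
      = (2*(k:ℝ)+1) * ∫ θ in (0:ℝ)..π, (1 - Real.cos θ)^k := by
  have hderiv : ∀ θ ∈ Set.uIcc (0:ℝ) π,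
      HasDerivAt (fun θ => Real.sin θ * (1 - Real.cos θ)^k)
      ((2*(k:ℝ)+1) * (1 - Real.cos θ)^k - ((k:ℝ)+1) * (1 - Real.cos θ)^(k+1)) θ := by
    intro θ _
    have h1 : HasDerivAt (fun x:ℝ => (1 - Real.cos x)^k)
        ((k:ℝ) * (1 - Real.cos θ)^(k-1) * Real.sin θ) θ := by
      have := ((Real.hasDerivAt_cos θ).const_sub 1).fun_pow k
      simpa using this
    have h2 := (Real.hasDerivAt_sin θ).fun_mul h1
    refine h2.congr_deriv ?_
    symm
    rcases k with _ | j
    · simp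
    · have hs := Real.sin_sq_add_cos_sq θ
      simp only [Nat.succ_sub_one]
      push_cast
      linear_combination (-((j:ℝ)+1) * (1 - Real.cos θ)^j) * hs
  have hint : IntervalIntegrable
      (fun θ => (2*(k:ℝ)+1) * (1 - Real.cos θ)^k - ((k:ℝ)+1) * (1 - Real.cos θ)^(k+1))
      volume 0 π := Continuous.intervalIntegrable (by fun_prop) _ _
  have h0 := intervalIntegral.integral_eq_sub_of_hasDerivAt hderiv hint
  rw [intervalIntegral.integral_sub (Continuous.intervalIntegrable (by fun_prop) _ _)
        (Continuous.intervalIntegrable (by fun_prop) _ _),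
      intervalIntegral.integral_const_mul, intervalIntegral.integral_const_mul] at h0
  simp only [Real.sin_pi, Real.sin_zero, zero_mul, sub_zero, sub_self] at h0
  linarith [h0]


/-- for `b, c > 0`, the sequence `(T_n(b,c))_{n≥0}` is a Stieltjes
moment sequence (there is a nonnegative Borel measure `μ` supported on `[0, ∞)` with
`T_n(b,c) = ∫_0^∞ x^n dμ(x)` for all `n`) if and only if `b² ≥ 4c`. -/
theorem genCT_stieltjes_iff (b c : ℝ) (hb : 0 < b) (hc : 0 < c) :
    (∃ μ : Measure ℝ, μ (Set.Iio 0) = 0 ∧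
      ∀ n : ℕ, Integrable (fun x : ℝ => x ^ n) μ ∧ genCT b c n = ∫ x, x ^ n ∂μ) ↔
      4 * c ≤ b ^ 2 := by
  set s := Real.sqrt c with hsdef
  have hs0 : 0 < s := Real.sqrt_pos.mpr hc
  have h4c : (4:ℝ)*c = (2*s)^2 := by
    rw [mul_pow, hsdef, Real.sq_sqrt hc.le]; ring
  have hg : Continuous (fun θ:ℝ => b + 2*s*Real.cos θ) := by fun_prop
  constructor
  · rintro ⟨μ, hnull, hμ⟩
    by_contra hlt
    push_neg at hlt
    have hb2s : b < 2*s := by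
      have h1 : Real.sqrt (b^2) < Real.sqrt (4*c) := Real.sqrt_lt_sqrt (by positivity) hlt
      rwa [Real.sqrt_sq hb.le, h4c, Real.sqrt_sq (by positivity)] at h1
    obtain ⟨m, hm⟩ := exists_nat_gt (b / (2*(2*s - b)))
    have hm2 : b * (2*(m:ℝ)+1) < 4*s*m := by
      have hpos : (0:ℝ) < 2*(2*s-b) := by linarith
      rw [div_lt_iff₀ hpos] at hm
      nlinarith [hm]
    set a : ℕ → ℝ := fun j => (b+2*s)^j * (-1)^(2*m-j) * ((2*m).choose j) with ha
    have hexp : ∀ x:ℝ, x * ((b+2*s) - x)^(2*m)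
        = ∑ j ∈ range (2*m+1), a j * x^(2*m-j+1) := by
      intro x
      rw [sub_eq_add_neg, add_pow, Finset.mul_sum]
      refine Finset.sum_congr rfl fun j _ => ?_
      rw [ha, neg_pow]
      ring
    set S : ℝ := ∑ j ∈ range (2*m+1), a j * genCT b c (2*m-j+1) with hS
    have hSnonneg : 0 ≤ S := by
      have hSμ : S = ∫ x, x * ((b+2*s) - x)^(2*m) ∂μ := by
        have hfe : (fun x:ℝ => x * ((b+2*s) - x)^(2*m))
            = fun x => ∑ j ∈ range (2*m+1), a j * x^(2*m-j+1) := funext hexp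
        rw [hfe, integral_finset_sum _ (fun j _ => ((hμ (2*m-j+1)).1.const_mul _))]
        refine Finset.sum_congr rfl fun j _ => ?_
        rw [MeasureTheory.integral_const_mul, ← (hμ _).2]
      rw [hSμ]
      apply MeasureTheory.integral_nonneg_of_ae
      have h1 : ∀ᵐ x ∂μ, x ∉ Set.Iio 0 := by
        rw [ae_iff]
        simpa [Set.Iio] using hnull
      filter_upwards [h1] with x hx
      have hx0 : 0 ≤ x := not_lt.mp (by simpa [Set.mem_Iio] using hx)
      have h2 : (0:ℝ) ≤ ((b+2*s) - x)^(2*m) := by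
        rw [pow_mul]; exact pow_nonneg (sq_nonneg _) m
      exact mul_nonneg hx0 h2
    have hSneg : S < 0 := by
      set I0 := ∫ θ in (0:ℝ)..π, (1-Real.cos θ)^(2*m) with hI0
      set I1 := ∫ θ in (0:ℝ)..π, (1-Real.cos θ)^(2*m+1) with hI1
      have hIrec : (2*(m:ℝ)+1) * I1 = (4*(m:ℝ)+1) * I0 := by
        have hh := one_sub_cos_rec (2*m)
        push_cast at hh
        rw [hI0, hI1]
        convert hh using 2 <;> push_cast <;> ring
      have hIpos : 0 < I0 := one_sub_cos_pos _
      have hpoint : ∀ θ:ℝ, (b+2*s*Real.cos θ) * ((b+2*s) - (b+2*s*Real.cos θ))^(2*m)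
          = ((2*s)^(2*m)*(b+2*s)) * (1-Real.cos θ)^(2*m)
            - ((2*s)^(2*m)*(2*s)) * (1-Real.cos θ)^(2*m+1) := by
        intro θ
        have h1 : (b+2*s) - (b+2*s*Real.cos θ) = (2*s) * (1 - Real.cos θ) := by ring
        rw [h1, mul_pow]
        ring
      have hint : (∫ θ in (0:ℝ)..π, (b+2*s*Real.cos θ) * ((b+2*s) - (b+2*s*Real.cos θ))^(2*m))
          = ((2*s)^(2*m)*(b+2*s)) * I0 - ((2*s)^(2*m)*(2*s)) * I1 := by
        rw [intervalIntegral.integral_congr (g := fun θ =>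
              ((2*s)^(2*m)*(b+2*s)) * (1-Real.cos θ)^(2*m)
                - ((2*s)^(2*m)*(2*s)) * (1-Real.cos θ)^(2*m+1)) (fun θ _ => hpoint θ),
            intervalIntegral.integral_sub (Continuous.intervalIntegrable (by fun_prop) _ _)
              (Continuous.intervalIntegrable (by fun_prop) _ _),
            intervalIntegral.integral_const_mul, intervalIntegral.integral_const_mul]
      have hPS : π * S = ∫ θ in (0:ℝ)..π,
          (b+2*s*Real.cos θ) * ((b+2*s) - (b+2*s*Real.cos θ))^(2*m) := by
        have hpe : Set.EqOn (fun θ:ℝ => (b+2*s*Real.cos θ) * ((b+2*s) - (b+2*s*Real.cos θ))^(2*m))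
            (fun θ:ℝ => ∑ j ∈ range (2*m+1), a j * (b+2*s*Real.cos θ)^(2*m-j+1))
            (Set.uIcc 0 π) := fun θ _ => hexp _
        rw [intervalIntegral.integral_congr hpe,
            intervalIntegral.integral_finset_sum
              (fun j _ => Continuous.intervalIntegrable (by fun_prop) _ _),
            hS, Finset.mul_sum]
        refine Finset.sum_congr rfl fun j _ => ?_
        rw [intervalIntegral.integral_const_mul, trig_rep b c hc]
        ring
      have hneg : π * S < 0 := by
        rw [hPS, hint]
        have h2s : (0:ℝ) < (2*s)^(2*m) := by positivity
        have h2m1 : (0:ℝ) < 2*(m:ℝ)+1 := by positivity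
        have e1 : 2*s*I1 = (2*s*(4*(m:ℝ)+1)/(2*(m:ℝ)+1)) * I0 := by
          field_simp
          linear_combination hIrec
        have e2 : (b+2*s) - 2*s*(4*(m:ℝ)+1)/(2*(m:ℝ)+1) < 0 := by
          rw [sub_neg, lt_div_iff₀ h2m1]
          nlinarith [hm2]
        have key : (b+2*s)*I0 - 2*s*I1 < 0 := by
          rw [e1, show (b+2*s)*I0 - (2*s*(4*(m:ℝ)+1)/(2*(m:ℝ)+1)) * I0
            = ((b+2*s) - 2*s*(4*(m:ℝ)+1)/(2*(m:ℝ)+1)) * I0 by ring]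
          exact mul_neg_of_neg_of_pos e2 hIpos
        rw [show (2*s)^(2*m)*(b+2*s) * I0 - (2*s)^(2*m)*(2*s) * I1
          = (2*s)^(2*m) * ((b+2*s)*I0 - 2*s*I1) by ring]
        exact mul_neg_of_pos_of_neg h2s key
      nlinarith [mul_nonneg Real.pi_pos.le hSnonneg, hneg]
    linarith
  · intro h4
    have hb2s : 2*s ≤ b := by
      have h1 : Real.sqrt (4*c) ≤ Real.sqrt (b^2) := Real.sqrt_le_sqrt h4
      rwa [Real.sqrt_sq hb.le, h4c, Real.sqrt_sq (by positivity)] at h1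
    set g : ℝ → ℝ := fun θ => b + 2*s*Real.cos θ with hgdef
    set ν := volume.restrict (Set.Icc (0:ℝ) π) with hν
    refine ⟨ENNReal.ofReal (1/π) • Measure.map g ν, ?_, ?_⟩
    · rw [Measure.smul_apply, Measure.map_apply hg.measurable measurableSet_Iio]
      have hemp : g ⁻¹' Set.Iio 0 ∩ Set.Icc 0 π = ∅ := by
        ext θ
        simp only [Set.mem_inter_iff, Set.mem_preimage, Set.mem_Iio, Set.mem_Icc,
          Set.mem_empty_iff_false, iff_false, not_and]
        intro h1
        exfalso
        have hcos := Real.neg_one_le_cos θ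
        have hge : (0:ℝ) ≤ b + 2*s*Real.cos θ := by nlinarith
        have hgθ : g θ = b + 2*s*Real.cos θ := rfl
        rw [hgθ] at h1
        linarith
      rw [hν, Measure.restrict_apply (hg.measurable measurableSet_Iio), hemp]
      simp
    · intro n
      have hcomp : Integrable (fun θ => (g θ)^n) ν := by
        rw [hν]
        exact Continuous.integrableOn_Icc (by fun_prop)
      have hi : Integrable (fun x:ℝ => x^n) (Measure.map g ν) := by
        rw [integrable_map_measure (continuous_pow n).aestronglyMeasurable
          hg.measurable.aemeasurable]
        exact hcomp
      constructor
      · exact hi.smul_measure ENNReal.ofReal_ne_top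
      · rw [MeasureTheory.integral_smul_measure,
          integral_map hg.measurable.aemeasurable (continuous_pow n).aestronglyMeasurable,
          ENNReal.toReal_ofReal (by positivity)]
        have h2 : (∫ θ, (g θ)^n ∂ν) = ∫ θ in (0:ℝ)..π, (g θ)^n := by
          rw [hν, intervalIntegral.integral_of_le Real.pi_pos.le,
            ← MeasureTheory.integral_Icc_eq_integral_Ioc]
        rw [h2, hgdef, trig_rep b c hc n, smul_eq_mul]
        field_simp
end
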